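/- arXiv:1509.06951 — 2 statements merged into one kernel-verified Lean document; each statement's English description precedes it below -/
import Mathlib

section
/- Let L be a finite-dimensional Lie algebra, let A/B and C/D be non-abelian chief factors of L that are m-related and both complemented. Then they are related via case (1): there exists a supplemented chief factor R/S with R/S ↘ A/B and R/S ↘ C/D. -/
section ChiefFactors

variable (K : Type*) (L : Type*) [Field K] [LieRing L] [LieAlgebra K L]

/-- `A/B` is a chief factor of `L`: `B` is an ideal and `A/B` is a minimal ideal of `L/B`,
i.e. `B < A` and there is no ideal strictly between `B` and `A`. -/
def IsChiefFactor (A B : LieIdeal K L) : Prop :=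
  B < A ∧ ∀ C : LieIdeal K L, B < C → C ≤ A → C = A

/-- The factor `A/B` is abelian. -/
def FactorAbelian (A B : LieIdeal K L) : Prop :=
  ∀ a ∈ A, ∀ a' ∈ A, ⁅a, a'⁆ ∈ B

/-- `M` is a maximal (proper) subalgebra of `L`. -/
def IsMaximalSubalgebra (M : LieSubalgebra K L) : Prop :=
  M ≠ ⊤ ∧ ∀ N : LieSubalgebra K L, M < N → N = ⊤

/-- `L = A + M`. -/
def SumIsTop (A : LieIdeal K L) (M : LieSubalgebra K L) : Prop :=
  ∀ x : L, ∃ a ∈ A, ∃ m ∈ M, x = a + m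

/-- `M` supplements the factor `A/B` : `L = A + M` and `B ⊆ A ∩ M`. -/
def Supplements (M : LieSubalgebra K L) (A B : LieIdeal K L) : Prop :=
  SumIsTop K L A M ∧ B ≤ A ∧ (B : Set L) ⊆ M

/-- `M` complements the factor `A/B` : `L = A + M` and `A ∩ M = B`. -/
def Complements (M : LieSubalgebra K L) (A B : LieIdeal K L) : Prop :=
  SumIsTop K L A M ∧ (A : Set L) ∩ M = B

/-- `A/B` is a supplemented chief factor (supplemented by a maximal subalgebra). -/
def SupplementedFactor (A B : LieIdeal K L) : Prop :=
  ∃ M : LieSubalgebra K L, IsMaximalSubalgebra K L M ∧ Supplements K L M A B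

/-- `A/B` is a Frattini chief factor: `A/B ⊆ φ(L/B)`, equivalently `A` is contained in
every maximal subalgebra of `L` containing `B`. -/
def FrattiniFactor (A B : LieIdeal K L) : Prop :=
  IsChiefFactor K L A B ∧
    ∀ M : LieSubalgebra K L, IsMaximalSubalgebra K L M → (B : Set L) ⊆ M → (A : Set L) ⊆ M

/-- `A/B ↘ C/D` : `A = B + C` and `B ∩ C = D`. -/
def Searrow (A B C D : LieIdeal K L) : Prop := A = B ⊔ C ∧ B ⊓ C = D

/-- `[A/B ↘ C/D]` is an m-crossing. -/
def MCrossing (A B C D : LieIdeal K L) : Prop :=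
  IsChiefFactor K L A B ∧ IsChiefFactor K L C D ∧ Searrow K L A B C D ∧
    FrattiniFactor K L A B ∧ SupplementedFactor K L C D

/-- The chief factors `A/B` and `C/D` are m-related. -/
def MRelated (A B C D : LieIdeal K L) : Prop :=
  (∃ R S, IsChiefFactor K L R S ∧ SupplementedFactor K L R S ∧
     Searrow K L R S A B ∧ Searrow K L R S C D) ∨
  (∃ U V W X, MCrossing K L U V W X ∧ Searrow K L V X A B ∧ Searrow K L W X C D) ∨
  (∃ Y Z, FrattiniFactor K L Y Z ∧ Searrow K L A B Y Z ∧ Searrow K L C D Y Z) ∨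
  (∃ U V W X, MCrossing K L U V W X ∧ Searrow K L A B U V ∧ Searrow K L C D U W)

/-- `I` is the core `M_L` of the subalgebra `M`: the largest ideal of `L` contained in `M`. -/
def IsCoreOf (I : LieIdeal K L) (M : LieSubalgebra K L) : Prop :=
  (I : Set L) ⊆ M ∧ ∀ J : LieIdeal K L, (J : Set L) ⊆ M → J ≤ I

/-- The quotient `L/I` is primitive: it has a core-free maximal subalgebra. -/
def QuotPrimitive (I : LieIdeal K L) : Prop :=
  ∃ M : LieSubalgebra K L, IsMaximalSubalgebra K L M ∧ IsCoreOf K L I M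

/-- The quotient `L/I` is monolithic: it has a unique minimal ideal. -/
def QuotMonolithic (I : LieIdeal K L) : Prop :=
  ∃! J : LieIdeal K L, IsChiefFactor K L J I

/-- `M` is a monolithic maximal subalgebra supplementing `A/B` :
`L/M_L` is a monolithic primitive Lie algebra. -/
def MonolithicSupplement (M : LieSubalgebra K L) (A B : LieIdeal K L) : Prop :=
  IsMaximalSubalgebra K L M ∧ Supplements K L M A B ∧
    ∃ I : LieIdeal K L, IsCoreOf K L I M ∧ QuotMonolithic K L I

/-- `A/B` and `C/D` are `L`-isomorphic: there is an isomorphism of `L`-modules between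
the factors which moreover preserves the induced Lie brackets. -/
def LIso (A B C D : LieIdeal K L) : Prop :=
  B ≤ A ∧ D ≤ C ∧
  ∃ e : (A ⧸ (LieSubmodule.comap (LieSubmodule.incl A) B)) ≃ₗ⁅K,L⁆
        (C ⧸ (LieSubmodule.comap (LieSubmodule.incl C) D)),
    ∀ (a a' : A) (c c' : C),
      e (LieSubmodule.Quotient.mk a) = LieSubmodule.Quotient.mk c →
      e (LieSubmodule.Quotient.mk a') = LieSubmodule.Quotient.mk c' →
      e (LieSubmodule.Quotient.mk ⟨⁅(a : L), (a' : L)⁆, A.lie_mem a'.2⟩) =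
        LieSubmodule.Quotient.mk ⟨⁅(c : L), (c' : L)⁆, C.lie_mem c'.2⟩

/-- `L/I` is a primitive Lie algebra of type 3 with (exactly two) minimal ideals
`J1/I` and `J2/I`, both non-abelian. -/
def QuotPrimitiveType3 (I J1 J2 : LieIdeal K L) : Prop :=
  QuotPrimitive K L I ∧ J1 ≠ J2 ∧ IsChiefFactor K L J1 I ∧ IsChiefFactor K L J2 I ∧
    ¬ FactorAbelian K L J1 I ∧ ¬ FactorAbelian K L J2 I ∧
    ∀ J : LieIdeal K L, IsChiefFactor K L J I → J = J1 ∨ J = J2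

/-- `A/B` and `C/D` are `L`-connected. -/
def LConnected (A B C D : LieIdeal K L) : Prop :=
  LIso K L A B C D ∨
    ∃ I J1 J2 : LieIdeal K L, QuotPrimitiveType3 K L I J1 J2 ∧
      LIso K L J1 I A B ∧ LIso K L J2 I C D

end ChiefFactors

/-! A Frattini chief factor `U/V` is abelian. In `L/V` let `N` be the image of `U`; it lies in
every maximal subalgebra. For `x ∈ N`, Fitting's decomposition `L/V = ker (ad x)ⁿ + im (ad x)ⁿ`
has its image part inside `N`, so a maximal subalgebra containing the Engel subalgebra of `x`
would be everything; hence that Engel subalgebra is `L/V`, and by Engel's theorem `N` is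
nilpotent. A nonzero nilpotent ideal is not perfect, so minimality of `U/V` gives `[U, U] ⊆ V`.
In cases (2)–(4) of m-relatedness, `A/B` or `C/D` inherits abelianness from a Frattini chief
factor, so for non-abelian factors only case (1) remains. -/

section Frattini

open LieAlgebra

variable {K L : Type*} [Field K] [LieRing L] [LieAlgebra K L]

lemma exists_le_isMaximalSubalgebra [FiniteDimensional K L] {E : LieSubalgebra K L}
    (hE : E ≠ ⊤) : ∃ M, IsMaximalSubalgebra K L M ∧ E ≤ M := by
  have : IsCoatomic (LieSubalgebra K L) := isCoatomic_of_orderTop_gt_wellFounded wellFounded_gt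
  obtain ⟨M, hM, hEM⟩ := (eq_top_or_exists_le_coatom E).resolve_left hE
  exact ⟨M, hM, hEM⟩

lemma IsMaximalSubalgebra.comap {L' : Type*} [LieRing L'] [LieAlgebra K L']
    {f : L →ₗ⁅K⁆ L'} (hf : Function.Surjective f) {M : LieSubalgebra K L'}
    (hM : IsMaximalSubalgebra K L' M) : IsMaximalSubalgebra K L (M.comap f) := by
  refine ⟨fun h => hM.1 (eq_top_iff.2 fun y _ => ?_), fun P hMP => eq_top_iff.2 fun y _ => ?_⟩
  · obtain ⟨x, rfl⟩ := hf y
    exact (h ▸ LieSubalgebra.mem_top x : x ∈ M.comap f)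
  obtain ⟨p, hpP, hpM⟩ := SetLike.exists_of_lt hMP
  have hM_le : M ≤ P.map f := fun z hz => by
    obtain ⟨x, rfl⟩ := hf z
    exact (LieSubalgebra.mem_map _ _ _).2 ⟨x, hMP.le hz, rfl⟩
  have hM_ne : M ≠ P.map f := fun h => hpM (h ▸ (LieSubalgebra.mem_map _ _ _).2 ⟨p, hpP, rfl⟩)
  obtain ⟨q, hqP, hfq⟩ := (LieSubalgebra.mem_map _ _ (f y)).1
    (hM.2 _ (hM_le.lt_of_ne hM_ne) ▸ LieSubalgebra.mem_top (f y))
  -- `y - q ∈ ker f ⊆ M.comap f`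
  have hyq : y - q ∈ P := hMP.le (by simp [hfq])
  simpa using P.add_mem hyq hqP

lemma engel_eq_top_of_forall_isMaximalSubalgebra [FiniteDimensional K L] {N : LieIdeal K L}
    (hN : ∀ M, IsMaximalSubalgebra K L M → (N : Set L) ⊆ M) {x : L} (hx : x ∈ N) :
    LieSubalgebra.engel K x = ⊤ := by
  by_contra hE
  obtain ⟨M, hM, hEM⟩ := exists_le_isMaximalSubalgebra hE
  obtain ⟨n, hn⟩ := Filter.eventually_atTop.mp
    (LinearMap.eventually_codisjoint_ker_pow_range_pow (ad K L x))
  have hker : LinearMap.ker (ad K L x ^ (n + 1)) ≤ M.toSubmodule := fun y hy =>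
    hEM ((LieSubalgebra.mem_engel_iff K x y).2 ⟨n + 1, hy⟩)
  have hrange : LinearMap.range (ad K L x ^ (n + 1)) ≤ M.toSubmodule := by
    rw [pow_succ', Module.End.mul_eq_comp]
    refine (LinearMap.range_comp_le_range _ _).trans ?_
    rintro _ ⟨y, rfl⟩
    exact hN M hM (lie_mem_left K L N x y hx)
  have htop : M.toSubmodule = ⊤ :=
    eq_top_iff.2 ((codisjoint_iff.1 (hn (n + 1) n.le_succ)).ge.trans (sup_le hker hrange))
  exact hM.1 ((LieSubalgebra.toSubmodule_eq_top M).1 htop)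

lemma isNilpotent_of_forall_isMaximalSubalgebra [FiniteDimensional K L] {N : LieIdeal K L}
    (hN : ∀ M, IsMaximalSubalgebra K L M → (N : Set L) ⊆ M) : LieRing.IsNilpotent N :=
  LieSubalgebra.isNilpotent_of_forall_le_engel (N : LieSubalgebra K L) fun x hx => by
    rw [engel_eq_top_of_forall_isMaximalSubalgebra hN hx]; exact le_top

lemma LieIdeal.eq_bot_of_lie_self_eq_self {I : LieIdeal K L} [IsSolvable I] (h : ⁅I, I⁆ = I) :
    I = ⊥ := by
  obtain ⟨k, hk⟩ := IsSolvable.solvable (R := K) (L := I)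
  have hD : ∀ k, derivedSeriesOfIdeal K L k I = I := fun k => by
    induction k with
    | zero => rfl
    | succ k ih => rw [derivedSeriesOfIdeal_succ, ih, h]
  rwa [LieIdeal.derivedSeries_eq_bot_iff, hD] at hk

lemma factorAbelian_iff_lie_le {A B : LieIdeal K L} : FactorAbelian K L A B ↔ ⁅A, A⁆ ≤ B :=
  (LieSubmodule.lie_le_iff A B A).symm

lemma FactorAbelian.of_le {U V C D : LieIdeal K L} (h : FactorAbelian K L U V) (hCU : C ≤ U)
    (hVC : V ⊓ C ≤ D) : FactorAbelian K L C D := by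
  rw [factorAbelian_iff_lie_le] at h ⊢
  exact (le_inf ((LieSubmodule.mono_lie hCU hCU).trans h) (LieSubmodule.lie_le_right C C)).trans hVC

lemma FactorAbelian.of_searrow {A B Y Z : LieIdeal K L} (h : Searrow K L A B Y Z)
    (hY : FactorAbelian K L Y Z) : FactorAbelian K L A B := by
  obtain ⟨rfl, rfl⟩ := h
  rw [factorAbelian_iff_lie_le] at hY ⊢
  rw [LieSubmodule.sup_lie, LieSubmodule.lie_sup (I := Y)]
  exact sup_le (LieSubmodule.lie_le_left B _)
    (sup_le (LieSubmodule.lie_le_right B Y) (hY.trans inf_le_left))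

def LieIdeal.toQuotient (I : LieIdeal K L) : L →ₗ⁅K⁆ L ⧸ I :=
  { (LieSubmodule.Quotient.mk' I : L →ₗ[K] L ⧸ I) with
    map_lie' := fun {x y} => (LieSubmodule.Quotient.mk_bracket I x y).symm }

lemma LieIdeal.toQuotient_surjective (I : LieIdeal K L) : Function.Surjective I.toQuotient :=
  LieSubmodule.Quotient.surjective_mk' I

@[simp]
lemma LieIdeal.ker_toQuotient (I : LieIdeal K L) : I.toQuotient.ker = I := by
  ext x
  exact LieSubmodule.Quotient.mk_eq_zero I

theorem FrattiniFactor.factorAbelian [FiniteDimensional K L] {U V : LieIdeal K L}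
    (h : FrattiniFactor K L U V) : FactorAbelian K L U V := by
  rw [factorAbelian_iff_lie_le]
  obtain ⟨⟨hVU, hchief⟩, hfrat⟩ := h
  set f := V.toQuotient
  have hf : Function.Surjective f := V.toQuotient_surjective
  set N := U.map f
  have hN : ∀ M, IsMaximalSubalgebra K (L ⧸ V) M → (N : Set (L ⧸ V)) ⊆ M := by
    intro M hM y hy
    obtain ⟨⟨x, hx⟩, rfl⟩ := LieIdeal.mem_map_of_surjective hf hy
    refine hfrat _ (hM.comap hf) (fun v hv => ?_) hx
    have hv0 : f v = 0 := LieHom.mem_ker.1 ((LieIdeal.ker_toQuotient V).ge hv)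
    simp [hv0]
  have : LieRing.IsNilpotent N := isNilpotent_of_forall_isMaximalSubalgebra hN
  by_contra hUU
  have hsup : ⁅U, U⁆ ⊔ V = U :=
    hchief _ (lt_of_le_of_ne le_sup_right fun h => hUU (h ▸ le_sup_left))
      (sup_le (LieSubmodule.lie_le_left U U) hVU.le)
  have hNN : ⁅N, N⁆ = N := by
    rw [← LieIdeal.map_bracket_eq f hf, ← LieIdeal.map_sup_ker_eq_map (f := f),
      LieIdeal.ker_toQuotient, hsup]
  have hUV : U ≤ V := by
    simpa [f] using (LieIdeal.map_eq_bot_iff (f := f)).1 (LieIdeal.eq_bot_of_lie_self_eq_self hNN)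
  exact hVU.not_ge hUV

end Frattini

variable {K : Type*} {L : Type*} [Field K] [LieRing L] [LieAlgebra K L]
variable [FiniteDimensional K L]

theorem stmt16_general (A B C D : LieIdeal K L)
    (hnaAB : ¬ FactorAbelian K L A B) (hnaCD : ¬ FactorAbelian K L C D)
    (hrel : MRelated K L A B C D) :
    ∃ R S : LieIdeal K L, IsChiefFactor K L R S ∧ SupplementedFactor K L R S ∧
      Searrow K L R S A B ∧ Searrow K L R S C D := by
  rcases hrel with h | ⟨U, V, W, X, ⟨-, -, ⟨hU, hVW⟩, hUV, -⟩, -, hWC⟩ |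
    ⟨Y, Z, hYZ, hAY, -⟩ | ⟨U, V, W, X, ⟨-, -, -, hUV, -⟩, hAU, -⟩
  · exact h
  · have hCW : C ≤ W := hWC.1 ▸ le_sup_right
    have hCU : C ≤ U := hU ▸ hCW.trans le_sup_right
    have hVC : V ⊓ C ≤ D := by
      rw [← hWC.2, ← hVW]
      exact le_inf (inf_le_inf_left V hCW) inf_le_right
    exact absurd (hUV.factorAbelian.of_le hCU hVC) hnaCD
  · exact absurd (hYZ.factorAbelian.of_searrow hAY) hnaAB
  · exact absurd (hUV.factorAbelian.of_searrow hAU) hnaAB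

theorem stmt16 (A B C D : LieIdeal K L)
    (hAB : IsChiefFactor K L A B) (hCD : IsChiefFactor K L C D)
    (hnaAB : ¬ FactorAbelian K L A B) (hnaCD : ¬ FactorAbelian K L C D)
    (hrel : MRelated K L A B C D)
    (hcAB : ∃ M : LieSubalgebra K L, IsMaximalSubalgebra K L M ∧ Complements K L M A B)
    (hcCD : ∃ M : LieSubalgebra K L, IsMaximalSubalgebra K L M ∧ Complements K L M C D) :
    ∃ R S : LieIdeal K L, IsChiefFactor K L R S ∧ SupplementedFactor K L R S ∧
      Searrow K L R S A B ∧ Searrow K L R S C D :=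
  stmt16_general A B C D hnaAB hnaCD hrel
end

section
/- Let L be a finite-dimensional Lie algebra, K ⊆ Y_0 ⊂ Y_1 ⊂ ... ⊂ Y_m = H part of a chief series of L, and A/B a supplemented chief factor of L with K ⊆ B ⊆ A ⊆ H. Let j' = max{ j : (A + Y_{j-1})/(B + Y_{j-1}) is a supplemented chief factor of L }, X = Y_{j'}, Y = Y_{j'-1}. Then X/Y is a supplemented chief factor of L, and both (A + Y)/(B + Y) and (B + X)/(B + Y) are supplemented chief factors of L. -/
variable {K : Type*} {L : Type*} [Field K] [LieRing L] [LieAlgebra K L]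
variable [FiniteDimensional K L]


lemma my_modular (P N E : LieIdeal K L) (hNE : N ≤ E) (hE : E ≤ P ⊔ N) :
    E = N ⊔ (P ⊓ E) := by
  apply le_antisymm
  · intro x hx
    obtain ⟨p, hp, n, hn, hx'⟩ := (LieSubmodule.mem_sup _ _ _).mp (hE hx)
    have hpE : p ∈ E := by
      have : p = x - n := by rw [← hx']; abel
      rw [this]; exact E.sub_mem hx (hNE hn)
    exact (LieSubmodule.mem_sup _ _ _).mpr ⟨n, hn, p, ⟨hp, hpE⟩, by rw [← hx']; abel⟩
  · exact sup_le hNE inf_le_right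

lemma chief_sup (P Q N : LieIdeal K L) (h : IsChiefFactor K L P Q)
    (hQN : Q ≤ N) (hPN : ¬ P ≤ N) : IsChiefFactor K L (P ⊔ N) N := by
  have hPQN : P ⊓ N = Q := by
    rcases (lt_or_eq_of_le (le_inf h.1.le hQN) : Q < P ⊓ N ∨ Q = P ⊓ N) with hlt | heq
    · have hP : P ⊓ N = P := h.2 _ hlt inf_le_left
      exact absurd (hP ▸ inf_le_right : P ≤ N) hPN
    · exact heq.symm
  constructor
  · exact lt_of_le_of_ne le_sup_right (fun hEq => hPN (hEq ▸ le_sup_left))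
  · intro E hNE hEP
    have hmod : E = N ⊔ (P ⊓ E) := my_modular P N E hNE.le hEP
    have hQPE : Q ≤ P ⊓ E := le_inf h.1.le (hQN.trans hNE.le)
    rcases lt_or_eq_of_le hQPE with hlt | heq
    · have : P ⊓ E = P := h.2 _ hlt inf_le_left
      rw [hmod, this, sup_comm]
    · exfalso
      rw [hmod, ← heq, sup_eq_left.mpr hQN] at hNE
      exact lt_irrefl _ hNE

lemma sumIsTop_mono {I J : LieIdeal K L} {M : LieSubalgebra K L}
    (h : SumIsTop K L I M) (hIJ : I ≤ J) : SumIsTop K L J M :=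
  fun x => let ⟨a, ha, m, hm, e⟩ := h x; ⟨a, hIJ ha, m, hm, e⟩

lemma sumIsTop_reduce {D I : LieIdeal K L} {M : LieSubalgebra K L}
    (h : SumIsTop K L (D ⊔ I) M) (hDM : (D : Set L) ⊆ M) : SumIsTop K L I M := by
  intro x
  obtain ⟨c, hc, m, hm, rfl⟩ := h x
  obtain ⟨d, hd, i, hi, rfl⟩ := (LieSubmodule.mem_sup _ _ _).mp hc
  exact ⟨i, hi, d + m, M.add_mem (hDM hd) hm, by abel⟩

lemma sumIsTop_of_not_subset (I : LieIdeal K L) (M : LieSubalgebra K L)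
    (hmax : IsMaximalSubalgebra K L M) (h : ¬ (I : Set L) ⊆ M) : SumIsTop K L I M := by
  set S : LieSubalgebra K L :=
    { toSubmodule := (I : Submodule K L) ⊔ (M.toSubmodule : Submodule K L)
      lie_mem' := by
        intro x y hx hy
        obtain ⟨a, ha, mm, hmm, rfl⟩ := Submodule.mem_sup.mp hx
        obtain ⟨a', ha', mm', hmm', rfl⟩ := Submodule.mem_sup.mp hy
        have h1 : ⁅a + mm, a'⁆ ∈ (I : Submodule K L) := I.lie_mem ha'
        have h2 : ⁅a, mm'⁆ ∈ (I : Submodule K L) := by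
          have : ⁅mm', a⁆ ∈ I := I.lie_mem ha
          have := I.neg_mem this
          simpa [lie_skew] using this
        have h3 : ⁅mm, mm'⁆ ∈ M.toSubmodule := M.lie_mem hmm hmm'
        have : ⁅a + mm, a' + mm'⁆ = (⁅a + mm, a'⁆ + ⁅a, mm'⁆) + ⁅mm, mm'⁆ := by
          simp [lie_add, add_lie]; abel
        rw [this]
        exact Submodule.add_mem _
          (Submodule.mem_sup_left (Submodule.add_mem _ h1 h2)) (Submodule.mem_sup_right h3) }
  have hMS : M < S := by
    constructor
    · intro x hx; exact Submodule.mem_sup_right hx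
    · intro hc
      apply h
      intro i hi
      exact hc (Submodule.mem_sup_left hi)
  have hStop : S = ⊤ := hmax.2 S hMS
  intro x
  have hxS : x ∈ S := hStop ▸ trivial
  obtain ⟨a, ha, mm, hmm, rfl⟩ := Submodule.mem_sup.mp hxS
  exact ⟨a, ha, mm, hmm, rfl⟩

theorem stmt17 (Kd H : LieIdeal K L) (m : ℕ) (Y : ℕ → LieIdeal K L)
    (hK0 : Kd ≤ Y 0) (hYm : Y m = H)
    (hchain : ∀ i < m, IsChiefFactor K L (Y (i + 1)) (Y i))
    (A B : LieIdeal K L) (hAB : IsChiefFactor K L A B)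
    (hsupp : SupplementedFactor K L A B)
    (hKB : Kd ≤ B) (hAH : A ≤ H)
    (j' : ℕ)
    (hj' : IsGreatest {j : ℕ | 1 ≤ j ∧ j ≤ m ∧
      IsChiefFactor K L (A ⊔ Y (j - 1)) (B ⊔ Y (j - 1)) ∧
      SupplementedFactor K L (A ⊔ Y (j - 1)) (B ⊔ Y (j - 1))} j') :
    (IsChiefFactor K L (Y j') (Y (j' - 1)) ∧ SupplementedFactor K L (Y j') (Y (j' - 1))) ∧
    (IsChiefFactor K L (A ⊔ Y (j' - 1)) (B ⊔ Y (j' - 1)) ∧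
      SupplementedFactor K L (A ⊔ Y (j' - 1)) (B ⊔ Y (j' - 1))) ∧
    (IsChiefFactor K L (B ⊔ Y j') (B ⊔ Y (j' - 1)) ∧
      SupplementedFactor K L (B ⊔ Y j') (B ⊔ Y (j' - 1))) := by
  obtain ⟨⟨h1j, hjm, hC, hCsupp⟩, hub⟩ := hj'
  have hXY : IsChiefFactor K L (Y j') (Y (j' - 1)) := by
    have h := hchain (j' - 1) (by omega)
    rwa [show j' - 1 + 1 = j' from by omega] at h
  obtain ⟨M, hMmax, hMtop, hDC, hDM⟩ := hCsupp
  have hYM : (Y (j' - 1) : Set L) ⊆ M := fun x hx =>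
    hDM ((le_sup_right : Y (j' - 1) ≤ B ⊔ Y (j' - 1)) hx)
  have hBsetM : (B : Set L) ⊆ M := fun x hx =>
    hDM ((le_sup_left : B ≤ B ⊔ Y (j' - 1)) hx)
  have hBX_eq : B ⊔ Y j' = (B ⊔ Y (j' - 1)) ⊔ Y j' := by
    rw [sup_assoc, sup_eq_right.mpr hXY.1.le]
  by_cases hXM : (Y j' : Set L) ⊆ M
  · -- Case X ⊆ M
    have hAX : A ≤ B ⊔ Y j' := by
      rcases eq_or_lt_of_le hjm with heq | hlt
      · have : A ≤ Y j' := by rw [heq, hYm]; exact hAH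
        exact this.trans le_sup_right
      · by_contra hA
        have hchief2 : IsChiefFactor K L (A ⊔ (B ⊔ Y j')) (B ⊔ Y j') :=
          chief_sup A B _ hAB le_sup_left hA
        have hAsup : A ⊔ (B ⊔ Y j') = A ⊔ Y j' := by
          rw [← sup_assoc, sup_eq_left.mpr hAB.1.le]
        rw [hAsup] at hchief2
        have hBXM : ((B ⊔ Y j' : LieIdeal K L) : Set L) ⊆ M := by
          intro x hx
          obtain ⟨b, hb, ξ, hξ, rfl⟩ := (LieSubmodule.mem_sup _ _ _).mp hx
          exact M.add_mem (hBsetM hb) (hXM hξ)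
        have hmem : j' + 1 ∈ {j : ℕ | 1 ≤ j ∧ j ≤ m ∧
            IsChiefFactor K L (A ⊔ Y (j - 1)) (B ⊔ Y (j - 1)) ∧
            SupplementedFactor K L (A ⊔ Y (j - 1)) (B ⊔ Y (j - 1))} := by
          have hidx : j' + 1 - 1 = j' := by omega
          refine ⟨by omega, by omega, ?_, ?_⟩
          · rw [hidx]; exact hchief2
          · rw [hidx]
            refine ⟨M, hMmax, sumIsTop_mono hMtop (sup_le_sup_left hXY.1.le A), ?_, hBXM⟩
            exact sup_le (hAB.1.le.trans le_sup_left) le_sup_right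
        have := hub hmem
        omega
    have hCle : A ⊔ Y (j' - 1) ≤ (B ⊔ Y (j' - 1)) ⊔ Y j' := by
      refine sup_le ?_ ?_
      · exact hBX_eq ▸ hAX
      · exact hXY.1.le.trans le_sup_right
    have hXnD : ¬ Y j' ≤ B ⊔ Y (j' - 1) := by
      intro hle
      have h2 : A ⊔ Y (j' - 1) ≤ B ⊔ Y (j' - 1) := hCle.trans (sup_le le_rfl hle)
      exact absurd (lt_of_lt_of_le hC.1 h2) (lt_irrefl _)
    have hchief3 : IsChiefFactor K L (Y j' ⊔ (B ⊔ Y (j' - 1))) (B ⊔ Y (j' - 1)) :=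
      chief_sup _ _ _ hXY le_sup_right hXnD
    rw [sup_comm (Y j') (B ⊔ Y (j' - 1))] at hchief3
    have hCeq : A ⊔ Y (j' - 1) = (B ⊔ Y (j' - 1)) ⊔ Y j' := hchief3.2 _ hC.1 hCle
    have htopX : SumIsTop K L (Y j') M := by
      have h := hMtop
      rw [hCeq] at h
      exact sumIsTop_reduce h hDM
    refine ⟨⟨hXY, M, hMmax, htopX, hXY.1.le, hYM⟩,
      ⟨hC, M, hMmax, hMtop, hDC, hDM⟩, ?_⟩
    rw [hBX_eq, ← hCeq]
    exact ⟨hC, M, hMmax, hMtop, hDC, hDM⟩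
  · -- Case X ⊄ M
    have htopX : SumIsTop K L (Y j') M := sumIsTop_of_not_subset _ _ hMmax hXM
    have hXnD : ¬ Y j' ≤ B ⊔ Y (j' - 1) := fun hle => hXM (fun x hx => hDM (hle hx))
    have hchief3 : IsChiefFactor K L (Y j' ⊔ (B ⊔ Y (j' - 1))) (B ⊔ Y (j' - 1)) :=
      chief_sup _ _ _ hXY le_sup_right hXnD
    rw [sup_comm (Y j') (B ⊔ Y (j' - 1))] at hchief3
    refine ⟨⟨hXY, M, hMmax, htopX, hXY.1.le, hYM⟩,
      ⟨hC, M, hMmax, hMtop, hDC, hDM⟩, ?_⟩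
    rw [hBX_eq]
    exact ⟨hchief3, M, hMmax, sumIsTop_mono htopX le_sup_right, le_sup_left, hDM⟩
end
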